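/- Normalization theorem for Call-by-Name: the unbiased strategy ⊳ is a normalizing strategy for →β. That is: (a) a term is ⊳-normal if and only if it is β-normal; and (b) if M →β* N for some β-normal N, then every maximal ⊳-sequence from M is finite and ends in a β-normal form (indeed, by Random Descent, it ends in N). -/

import Mathlib

/-- Untyped λ-terms in de Bruijn representation. -/
inductive Tm : Type
  | var : ℕ → Tm
  | lam : Tm → Tm
  | app : Tm → Tm → Tm
deriving DecidableEq

namespace Tm

/-- Lift (shift by one) the free variables of index `≥ d`. -/
def lift (d : ℕ) : Tm → Tm
  | var n => if n < d then var n else var (n + 1)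
  | lam M => lam (lift (d + 1) M)
  | app M N => app (lift d M) (lift d N)

/-- Capture-avoiding substitution `M[N/k]` of `N` for the free variable `k` in `M`. -/
def subst : Tm → ℕ → Tm → Tm
  | var n, k, N => if n = k then N else if k < n then var (n - 1) else var n
  | lam M, k, N => lam (subst M (k + 1) (lift 0 N))
  | app M₁ M₂, k, N => app (subst M₁ k N) (subst M₂ k N)

end Tm

/-- β-reduction: the closure of the root rule `(λx.M)N ↦β M[N/x]` under arbitrary contexts. -/
inductive Beta : Tm → Tm → Prop
  | beta (M N : Tm) : Beta (Tm.app (Tm.lam M) N) (M.subst 0 N)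
  | lam {M M'} : Beta M M' → Beta (Tm.lam M) (Tm.lam M')
  | appL {M M' N} : Beta M M' → Beta (Tm.app M N) (Tm.app M' N)
  | appR {M N N'} : Beta N N' → Beta (Tm.app M N) (Tm.app M N')

/-- Head reduction: the closure of `↦β` under head contexts `H ::= ⟨⟩ | λx.H | H M`. -/
inductive Head : Tm → Tm → Prop
  | beta (M N : Tm) : Head (Tm.app (Tm.lam M) N) (M.subst 0 N)
  | lam {M M'} : Head M M' → Head (Tm.lam M) (Tm.lam M')
  | appL {M M' N} : Head M M' → Head (Tm.app M N) (Tm.app M' N)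

/-- The unbiased strategy `⊳`: perform head steps as long as possible; once the term has
no head redex, iterate in the subterms (in arbitrary order). -/
inductive Unb : Tm → Tm → Prop
  | head {M M'} : Head M M' → Unb M M'
  | lam {P P'} : (∀ s, ¬ Head (Tm.lam P) s) → Unb P P' → Unb (Tm.lam P) (Tm.lam P')
  | appL {P P' Q} : (∀ s, ¬ Head (Tm.app P Q) s) → Unb P P' →
      Unb (Tm.app P Q) (Tm.app P' Q)
  | appR {P Q Q'} : (∀ s, ¬ Head (Tm.app P Q) s) → Unb Q Q' →
      Unb (Tm.app P Q) (Tm.app P Q')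

/-- `M` is `r`-normal: it has no `r`-successor. -/
def NormalElt (r : Tm → Tm → Prop) (M : Tm) : Prop := ∀ N, ¬ r M N

/-- A maximal `r`-sequence from `M`, encoded as a stream that stabilizes on a normal
form in the finite case. -/
def MaxSeq (r : Tm → Tm → Prop) (M : Tm) (f : ℕ → Tm) : Prop :=
  f 0 = M ∧ ∀ n, r (f n) (f (n + 1)) ∨ (NormalElt r (f n) ∧ f (n + 1) = f n)

/-!
The unbiased strategy has the one-step diamond property: two head steps close in one step
each (head reduction is closed under substitution), and a step inside a neutral term `x M₁ ⋯ Mₙ`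
leaves it neutral, so it commutes with any other inner step. By random descent every maximal
`⊳`-sequence from a term that `⊳`-reduces to a normal form `N` ends in `N`. It remains to turn
`M →β* N` into `M ⊳* N`: standard reductions (head reduction, then standard reductions of the
arguments) absorb β-steps on the right, and a standard reduction to a normal form is a
`⊳`-reduction, because the applicative head of the head form it reaches becomes neutral.
-/

namespace Tm

theorem lift_lift (M : Tm) {d e : ℕ} (h : d ≤ e) :
    lift (e + 1) (lift d M) = lift d (lift e M) := by
  induction M generalizing d e with
  | var n => grind [lift]
  | lam M ih => simp [lift, ih (Nat.succ_le_succ h)]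
  | app M N ihM ihN => simp [lift, ihM h, ihN h]

theorem lift_subst_of_le (M N : Tm) {d k : ℕ} (h : d ≤ k) :
    lift d (M.subst k N) = (lift d M).subst (k + 1) (lift d N) := by
  induction M generalizing N d k with
  | var n => grind [lift, subst]
  | lam M ih =>
    simp [subst, lift, ih _ (Nat.succ_le_succ h), lift_lift N (Nat.zero_le d)]
  | app A B ihA ihB => simp [subst, lift, ihA, ihB, h]

theorem lift_subst_of_ge (M N : Tm) {d j : ℕ} (h : j ≤ d) :
    lift d (M.subst j N) = (lift (d + 1) M).subst j (lift d N) := by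
  induction M generalizing N d j with
  | var n => grind [lift, subst]
  | lam M ih =>
    simp [subst, lift, ih _ (Nat.succ_le_succ h), lift_lift N (Nat.zero_le d)]
  | app A B ihA ihB => simp [subst, lift, ihA, ihB, h]

theorem subst_lift (M N : Tm) (j : ℕ) : (lift j M).subst j N = M := by
  induction M generalizing N j with
  | var n => grind [lift, subst]
  | lam M ih => simp [lift, subst, ih]
  | app A B ihA ihB => simp [lift, subst, ihA, ihB]

theorem subst_subst (M N P : Tm) {j k : ℕ} (h : j ≤ k) :
    (M.subst j N).subst k P = (M.subst (k + 1) (lift j P)).subst j (N.subst k P) := by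
  induction M generalizing N P j k with
  | var n => grind [lift, subst, subst_lift]
  | lam M ih =>
    simp [subst, ih _ _ (Nat.succ_le_succ h), lift_lift P (Nat.zero_le j),
      lift_subst_of_le N P (Nat.zero_le k)]
  | app A B ihA ihB => simp [subst, ihA, ihB, h]

end Tm

open Relation

section RandomDescent

variable {α : Type*} {r : α → α → Prop}

/-- Forces all reduction paths between two elements to have the same length. -/
def Diamond (r : α → α → Prop) : Prop :=
  ∀ ⦃a b c⦄, r a b → r a c → b = c ∨ ∃ d, r b d ∧ r c d

variable (r) in
inductive StepsIn : ℕ → α → α → Prop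
  | refl (a : α) : StepsIn 0 a a
  | head {a b c : α} {n : ℕ} : r a b → StepsIn n b c → StepsIn (n + 1) a c

theorem Relation.ReflTransGen.exists_stepsIn {a b : α} (h : ReflTransGen r a b) :
    ∃ n, StepsIn r n a b := by
  induction h using ReflTransGen.head_induction_on with
  | refl => exact ⟨0, .refl b⟩
  | head hab _ ih =>
    obtain ⟨n, hn⟩ := ih
    exact ⟨n + 1, .head hab hn⟩

theorem StepsIn.of_diamond {n : ℕ} {a a' b : α} (hr : Diamond r) (hb : ∀ c, ¬ r b c)
    (h : StepsIn r (n + 1) a b) (ha : r a a') : StepsIn r n a' b := by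
  induction n generalizing a a' with
  | zero =>
    obtain _ | ⟨ha₁, _ | _⟩ := h
    rcases hr ha ha₁ with rfl | ⟨d, -, hd⟩
    · exact .refl _
    · exact absurd hd (hb d)
  | succ n ih =>
    obtain _ | ⟨ha₁, h₁⟩ := h
    rcases hr ha ha₁ with rfl | ⟨d, had, ha₁d⟩
    · exact h₁
    · exact .head had (ih h₁ ha₁d)

/-- van Oostrom's random descent. -/
theorem exists_apply_eq_of_diamond (hr : Diamond r) {a b : α} (hb : ∀ c, ¬ r b c)
    (hab : ReflTransGen r a b) (f : ℕ → α) (hf₀ : f 0 = a)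
    (hf : ∀ n, r (f n) (f (n + 1)) ∨ ((∀ c, ¬ r (f n) c) ∧ f (n + 1) = f n)) :
    ∃ n, f n = b := by
  obtain ⟨k, hk⟩ := hab.exists_stepsIn
  clear hab
  induction k generalizing a f with
  | zero =>
    cases hk
    exact ⟨0, hf₀⟩
  | succ k ih =>
    subst hf₀
    obtain hstep | ⟨hnf, -⟩ := hf 0
    · obtain ⟨n, hn⟩ := ih (f ∘ (· + 1)) rfl (fun n => hf (n + 1)) (hk.of_diamond hr hb hstep)
      exact ⟨n + 1, hn⟩
    · obtain _ | ⟨h₁, -⟩ := hk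
      exact absurd h₁ (hnf _)

end RandomDescent

namespace Head

theorem toBeta {M M' : Tm} (h : Head M M') : Beta M M' := by
  induction h with
  | beta M N => exact .beta M N
  | lam _ ih => exact .lam ih
  | appL _ ih => exact .appL ih

theorem subst {M M' : Tm} (h : Head M M') (k : ℕ) (N : Tm) :
    Head (M.subst k N) (M'.subst k N) := by
  induction h generalizing k N with
  | beta A B =>
    rw [Tm.subst_subst A B N (Nat.zero_le k)]
    exact .beta _ _
  | lam _ ih => exact .lam (ih _ _)
  | appL _ ih => exact .appL (ih _ _)

theorem lift {M M' : Tm} (h : Head M M') (d : ℕ) : Head (M.lift d) (M'.lift d) := by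
  induction h generalizing d with
  | beta A B =>
    rw [Tm.lift_subst_of_ge A B (Nat.zero_le d)]
    exact .beta _ _
  | lam _ ih => exact .lam (ih _)
  | appL _ ih => exact .appL (ih _)

theorem diamond : Diamond Head := by
  intro M M₁ M₂ h₁ h₂
  induction h₁ generalizing M₂ with
  | beta A B =>
    cases h₂ with
    | beta => exact .inl rfl
    | appL h => cases h with
      | lam h => exact .inr ⟨_, h.subst 0 B, .beta _ B⟩
  | lam _ ih =>
    cases h₂ with
    | lam h₂ =>
      rcases ih h₂ with rfl | ⟨M₃, h₁₃, h₂₃⟩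
      · exact .inl rfl
      · exact .inr ⟨_, .lam h₁₃, .lam h₂₃⟩
  | appL h₁ ih =>
    cases h₂ with
    | beta => cases h₁ with
      | lam h₁ => exact .inr ⟨_, .beta _ _, h₁.subst 0 _⟩
    | appL h₂ =>
      rcases ih h₂ with rfl | ⟨M₃, h₁₃, h₂₃⟩
      · exact .inl rfl
      · exact .inr ⟨_, .appL h₁₃, .appL h₂₃⟩

end Head

def IsLam (M : Tm) : Prop := ∃ P, M = Tm.lam P

/-- The terms `x M₁ ⋯ Mₙ`. -/
def Neutral (M : Tm) : Prop := NormalElt Head M ∧ ¬ IsLam M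

theorem normalElt_head_app_iff {P Q : Tm} : NormalElt Head (Tm.app P Q) ↔ Neutral P := by
  refine ⟨fun h => ⟨fun P' hP => h _ (.appL hP), ?_⟩, fun ⟨hP, hl⟩ N hN => ?_⟩
  · rintro ⟨A, rfl⟩
    exact h _ (.beta A Q)
  · cases hN with
    | beta => exact hl ⟨_, rfl⟩
    | appL hP' => exact hP _ hP'

theorem normalElt_head_lam {P : Tm} (h : NormalElt Head P) : NormalElt Head (Tm.lam P) := by
  intro _ hP
  cases hP with
  | lam hP => exact h _ hP

namespace Unb

theorem toBeta {M M' : Tm} (h : Unb M M') : Beta M M' := by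
  induction h with
  | head h => exact h.toBeta
  | lam _ _ ih => exact .lam ih
  | appL _ _ ih => exact .appL ih
  | appR _ _ ih => exact .appR ih

theorem head_or_normalElt {M M' : Tm} (h : Unb M M') : Head M M' ∨ NormalElt Head M := by
  cases h with
  | head h => exact .inl h
  | lam hn _ | appL hn _ | appR hn _ => exact .inr hn

theorem lam' {P P' : Tm} (h : Unb P P') : Unb (Tm.lam P) (Tm.lam P') := by
  rcases h.head_or_normalElt with hh | hn
  · exact .head (.lam hh)
  · exact .lam (normalElt_head_lam hn) h

theorem appL_of_neutral {P P' : Tm} (hP : Neutral P) (h : Unb P P') (Q : Tm) :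
    Unb (Tm.app P Q) (Tm.app P' Q) :=
  .appL (normalElt_head_app_iff.2 hP) h

theorem appR_of_neutral {P Q Q' : Tm} (hP : Neutral P) (h : Unb Q Q') :
    Unb (Tm.app P Q) (Tm.app P Q') :=
  .appR (normalElt_head_app_iff.2 hP) h

theorem appL_of_not_isLam {P P' : Tm} (hP : ¬ IsLam P) (h : Unb P P') (Q : Tm) :
    Unb (Tm.app P Q) (Tm.app P' Q) := by
  rcases h.head_or_normalElt with hh | hn
  · exact .head (.appL hh)
  · exact appL_of_neutral ⟨hn, hP⟩ h Q

theorem neutral {P P' : Tm} (h : Unb P P') (hP : Neutral P) : Neutral P' := by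
  have not_isLam_app {A B : Tm} : ¬ IsLam (Tm.app A B) := fun ⟨_, h⟩ => Tm.noConfusion h
  induction h with
  | head h => exact absurd h (hP.1 _)
  | lam _ _ => exact absurd ⟨_, rfl⟩ hP.2
  | appL hn _ ih =>
    exact ⟨normalElt_head_app_iff.2 (ih (normalElt_head_app_iff.1 hn)), not_isLam_app⟩
  | appR hn _ => exact ⟨normalElt_head_app_iff.2 (normalElt_head_app_iff.1 hn), not_isLam_app⟩

theorem diamond : Diamond Unb := by
  intro M M₁ M₂ h₁ h₂
  induction h₁ generalizing M₂ with
  | head h₁ =>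
    cases h₂ with
    | head h₂ =>
      rcases Head.diamond h₁ h₂ with rfl | ⟨M₃, h₁₃, h₂₃⟩
      · exact .inl rfl
      · exact .inr ⟨M₃, .head h₁₃, .head h₂₃⟩
    | lam hn _ | appL hn _ | appR hn _ => exact absurd h₁ (hn _)
  | lam hn h₁ ih =>
    cases h₂ with
    | head h₂ => exact absurd h₂ (hn _)
    | lam _ h₂ =>
      rcases ih h₂ with rfl | ⟨M₃, h₁₃, h₂₃⟩
      · exact .inl rfl
      · exact .inr ⟨_, h₁₃.lam', h₂₃.lam'⟩
  | appL hn h₁ ih =>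
    have hP := normalElt_head_app_iff.1 hn
    cases h₂ with
    | head h₂ => exact absurd h₂ (hn _)
    | appL _ h₂ =>
      rcases ih h₂ with rfl | ⟨M₃, h₁₃, h₂₃⟩
      · exact .inl rfl
      · exact .inr ⟨_, appL_of_neutral (h₁.neutral hP) h₁₃ _,
          appL_of_neutral (h₂.neutral hP) h₂₃ _⟩
    | appR _ h₂ =>
      exact .inr ⟨_, appR_of_neutral (h₁.neutral hP) h₂, appL_of_neutral hP h₁ _⟩
  | appR hn h₁ ih =>
    have hP := normalElt_head_app_iff.1 hn
    cases h₂ with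
    | head h₂ => exact absurd h₂ (hn _)
    | appL _ h₂ =>
      exact .inr ⟨_, appL_of_neutral hP h₂ _, appR_of_neutral (h₂.neutral hP) h₁⟩
    | appR _ h₂ =>
      rcases ih h₂ with rfl | ⟨M₃, h₁₃, h₂₃⟩
      · exact .inl rfl
      · exact .inr ⟨_, appR_of_neutral hP h₁₃, appR_of_neutral hP h₂₃⟩

end Unb

theorem Beta.exists_unb {M M' : Tm} (h : Beta M M') : ∃ M'', Unb M M'' := by
  induction h with
  | beta A B => exact ⟨_, .head (.beta A B)⟩
  | lam _ ih =>
    obtain ⟨_, h⟩ := ih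
    exact ⟨_, h.lam'⟩
  | @appL P _ Q _ ih =>
    obtain ⟨_, h⟩ := ih
    by_cases hP : IsLam P
    · obtain ⟨A, rfl⟩ := hP
      exact ⟨_, .head (.beta A Q)⟩
    · exact ⟨_, h.appL_of_not_isLam hP Q⟩
  | @appR P Q _ _ ih =>
    obtain ⟨_, h⟩ := ih
    by_cases hn : NormalElt Head (Tm.app P Q)
    · exact ⟨_, .appR hn h⟩
    · obtain ⟨_, hh⟩ := not_forall_not.1 hn
      exact ⟨_, .head hh⟩

theorem normalElt_unb_iff (M : Tm) : NormalElt Unb M ↔ NormalElt Beta M :=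
  ⟨fun h _ hb => let ⟨_, hu⟩ := hb.exists_unb; h _ hu, fun h _ hu => h _ hu.toBeta⟩

theorem isLam_of_reflTransGen_unb {M M' : Tm} (h : ReflTransGen Unb M M') (hM : IsLam M) :
    IsLam M' := by
  induction h with
  | refl => exact hM
  | tail _ hu ih =>
    obtain ⟨_, rfl⟩ := ih
    cases hu with
    | head hh => cases hh with
      | lam _ => exact ⟨_, rfl⟩
    | lam _ _ => exact ⟨_, rfl⟩

theorem reflTransGen_unb_lam {P P' : Tm} (h : ReflTransGen Unb P P') :
    ReflTransGen Unb (Tm.lam P) (Tm.lam P') :=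
  ReflTransGen.lift Tm.lam (fun _ _ h => h.lam') _ _ h

theorem reflTransGen_unb_appL {P P' : Tm} (h : ReflTransGen Unb P P') (hP' : ¬ IsLam P')
    (Q : Tm) : ReflTransGen Unb (Tm.app P Q) (Tm.app P' Q) := by
  induction h using ReflTransGen.head_induction_on with
  | refl => exact .refl
  | head hu h ih =>
    have hP : ¬ IsLam _ := fun hP => hP' (isLam_of_reflTransGen_unb (.head hu h) hP)
    exact .head (hu.appL_of_not_isLam hP Q) ih

theorem reflTransGen_unb_appR {P Q Q' : Tm} (hP : Neutral P) (h : ReflTransGen Unb Q Q') :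
    ReflTransGen Unb (Tm.app P Q) (Tm.app P Q') :=
  ReflTransGen.lift (Tm.app P) (fun _ _ h => Unb.appR_of_neutral hP h) _ _ h

/-- Kashima's standard reduction, with head reduction (also under `λ`) in place of weak head
reduction. -/
inductive Standard : Tm → Tm → Prop
  | var {M : Tm} {n : ℕ} : ReflTransGen Head M (.var n) → Standard M (.var n)
  | lam {M P P' : Tm} : ReflTransGen Head M (.lam P) → Standard P P' → Standard M (.lam P')
  | app {M P Q P' Q' : Tm} : ReflTransGen Head M (.app P Q) → Standard P P' → Standard Q Q' →
      Standard M (.app P' Q')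

theorem reflTransGen_head_subst {M M' : Tm} (h : ReflTransGen Head M M') (k : ℕ) (N : Tm) :
    ReflTransGen Head (M.subst k N) (M'.subst k N) :=
  ReflTransGen.lift (Tm.subst · k N) (fun _ _ h => h.subst k N) _ _ h

theorem reflTransGen_head_lift {M M' : Tm} (h : ReflTransGen Head M M') (d : ℕ) :
    ReflTransGen Head (M.lift d) (M'.lift d) :=
  ReflTransGen.lift (Tm.lift d) (fun _ _ h => h.lift d) _ _ h

theorem reflTransGen_head_appL {M M' : Tm} (h : ReflTransGen Head M M') (N : Tm) :
    ReflTransGen Head (Tm.app M N) (Tm.app M' N) :=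
  ReflTransGen.lift (Tm.app · N) (fun _ _ h => .appL h) _ _ h

namespace Standard

theorem head_trans {M M' N : Tm} (h : ReflTransGen Head M M') (hs : Standard M' N) :
    Standard M N := by
  cases hs with
  | var h' => exact .var (h.trans h')
  | lam h' hs => exact .lam (h.trans h') hs
  | app h' hs₁ hs₂ => exact .app (h.trans h') hs₁ hs₂

protected theorem refl (M : Tm) : Standard M M := by
  induction M with
  | var n => exact .var .refl
  | lam P ih => exact .lam .refl ih
  | app P Q ihP ihQ => exact .app .refl ihP ihQ

theorem lift {M M' : Tm} (h : Standard M M') (d : ℕ) : Standard (M.lift d) (M'.lift d) := by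
  induction h generalizing d with
  | var hM => exact head_trans (reflTransGen_head_lift hM d) (.refl _)
  | lam hM _ ih => exact .lam (reflTransGen_head_lift hM d) (ih _)
  | app hM _ _ ihP ihQ => exact .app (reflTransGen_head_lift hM d) (ihP d) (ihQ d)

theorem subst {M M' N N' : Tm} (h : Standard M M') (hN : Standard N N') (k : ℕ) :
    Standard (M.subst k N) (M'.subst k N') := by
  induction h generalizing N N' k with
  | @var _ n hM =>
    refine head_trans (reflTransGen_head_subst hM k N) ?_
    simp only [Tm.subst]
    split_ifs
    exacts [hN, .refl _, .refl _]
  | lam hM _ ih =>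
    exact .lam (reflTransGen_head_subst hM k N) (ih (hN.lift 0) _)
  | app hM _ _ ihP ihQ =>
    exact .app (reflTransGen_head_subst hM k N) (ihP hN k) (ihQ hN k)

theorem tail_beta {M M' M'' : Tm} (h : Standard M M') (hb : Beta M' M'') : Standard M M'' := by
  induction h generalizing M'' with
  | var _ => cases hb
  | lam hM _ ih =>
    cases hb with
    | lam hb => exact .lam hM (ih hb)
  | app hM hP hQ ihP ihQ =>
    cases hb with
    | beta A B =>
      cases hP with
      | lam hP hA =>
        have hred := (hM.trans (reflTransGen_head_appL hP _)).tail (.beta _ _)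
        exact head_trans hred (hA.subst hQ 0)
    | appL hb => exact .app hM (ihP hb) hQ
    | appR hb => exact .app hM hP (ihQ hb)

theorem of_reflTransGen_beta {M N : Tm} (h : ReflTransGen Beta M N) : Standard M N := by
  induction h with
  | refl => exact .refl M
  | tail _ hb ih => exact ih.tail_beta hb

theorem reflTransGen_unb {M N : Tm} (h : Standard M N) (hN : NormalElt Beta N) :
    ReflTransGen Unb M N := by
  have head_unb {A B : Tm} : ReflTransGen Head A B → ReflTransGen Unb A B :=
    ReflTransGen.mono (fun _ _ => .head) _ _
  induction h with
  | var hM => exact head_unb hM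
  | lam hM _ ih => exact (head_unb hM).trans (reflTransGen_unb_lam (ih fun _ h => hN _ (.lam h)))
  | @app _ _ Q P' Q' hM _ _ ihP ihQ =>
    have hP' : Neutral P' := by
      refine ⟨fun _ h => hN _ (.appL h.toBeta), ?_⟩
      rintro ⟨A, rfl⟩
      exact hN _ (.beta A Q')
    refine (head_unb hM).trans ((reflTransGen_unb_appL ?_ hP'.2 Q).trans ?_)
    · exact ihP fun _ h => hN _ (.appL h)
    · exact reflTransGen_unb_appR hP' (ihQ fun _ h => hN _ (.appR h))

end Standard

/-- **Normalization theorem for Call-by-Name**: the unbiased strategy `⊳` is a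
normalizing strategy for `→β`.
(a) a term is `⊳`-normal iff it is β-normal;
(b) if `M →β* N` with `N` β-normal, then every maximal `⊳`-sequence from `M` is finite
    and ends in a β-normal form — indeed, by Random Descent, it ends in `N`. -/
theorem cbn_normalization :
    (∀ M : Tm, NormalElt Unb M ↔ NormalElt Beta M) ∧
    (∀ M N : Tm, NormalElt Beta N → Relation.ReflTransGen Beta M N →
      ∀ f : ℕ → Tm, MaxSeq Unb M f → ∃ n, NormalElt Unb (f n) ∧ f n = N) := by
  refine ⟨normalElt_unb_iff, fun M N hN hMN f hf => ?_⟩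
  have hNunb : NormalElt Unb N := (normalElt_unb_iff N).2 hN
  have hpath : ReflTransGen Unb M N := (Standard.of_reflTransGen_beta hMN).reflTransGen_unb hN
  obtain ⟨n, hn⟩ := exists_apply_eq_of_diamond Unb.diamond hNunb hpath f hf.1 hf.2
  exact ⟨n, hn ▸ hNunb, hn⟩
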